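/- The clobber position ooxoxx is equivalent to the sum of the clobber positions oxox and ox. -/

import Mathlib

namespace SetTheory

universe u

/-- Conway's pre-games, as in Mathlib (Dec 2024), which no longer provides them. -/
inductive PGame : Type (u + 1)
  | mk : ∀ α β : Type u, (α → PGame) → (β → PGame) → PGame

namespace PGame

def ofLists (L R : List PGame.{u}) : PGame.{u} :=
  mk (ULift (Fin L.length)) (ULift (Fin R.length)) (fun i => L.get i.down) fun j => R.get j.down

instance : Zero PGame := ⟨⟨PEmpty, PEmpty, PEmpty.elim, PEmpty.elim⟩⟩

/-- The pair `(x ≤ y, x ⧏ y)`, by recursion on `x`, then on `y`. -/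
noncomputable def leLf : PGame.{u} → PGame.{u} → Prop × Prop :=
  fun x => PGame.rec (motive := fun _ => PGame.{u} → Prop × Prop)
    (fun xl xr xL xR IHxL IHxR y => PGame.rec (motive := fun _ => Prop × Prop)
      (fun yl yr yL yR IHyL IHyR =>
        ((∀ i, (IHxL i (mk yl yr yL yR)).2) ∧ (∀ j, (IHyR j).2),
         (∃ i, (IHyL i).1) ∨ (∃ j, (IHxR j (mk yl yr yL yR)).1))) y) x

noncomputable instance : LE PGame.{u} := ⟨fun x y => (leLf x y).1⟩

def Equiv (x y : PGame.{u}) : Prop := x ≤ y ∧ y ≤ x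

instance : HasEquiv PGame.{u} := ⟨Equiv⟩

noncomputable def add (x : PGame.{u}) : PGame.{u} → PGame.{u} :=
  PGame.rec (motive := fun _ => PGame.{u} → PGame.{u})
    (fun xl xr _ _ IHxL IHxR y => PGame.rec (motive := fun _ => PGame.{u})
      (fun yl yr yL yR IHyL IHyR =>
        mk (xl ⊕ yl) (xr ⊕ yr) (Sum.elim (fun i => IHxL i (mk yl yr yL yR)) IHyL)
          (Sum.elim (fun j => IHxR j (mk yl yr yL yR)) IHyR)) y) x

noncomputable instance : Add PGame.{u} := ⟨add⟩

end PGame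

end SetTheory

open SetTheory PGame

inductive Cell | x | o | e
deriving DecidableEq

abbrev Pos := List Cell

/-- All positions reachable by one move of the player with stones `me`
clobbering an adjacent stone of the opponent `opp`. -/
def movesAux (me opp : Cell) : Pos → List Pos
  | a :: b :: rest =>
      (if a = me ∧ b = opp then [Cell.e :: me :: rest] else []) ++
      (if a = opp ∧ b = me then [me :: Cell.e :: rest] else []) ++
      (movesAux me opp (b :: rest)).map (a :: ·)
  | _ => []

def leftMoves (p : Pos) : List Pos := movesAux Cell.x Cell.o p
def rightMoves (p : Pos) : List Pos := movesAux Cell.o Cell.x p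

def stones (p : Pos) : Nat := p.countP (· != Cell.e)

/-- Game value of a clobber position, via fuel recursion (each move removes one stone). -/
def valueFuel : Nat → Pos → PGame
  | 0, _ => 0
  | n+1, p => PGame.ofLists ((leftMoves p).map (valueFuel n)) ((rightMoves p).map (valueFuel n))

def value (p : Pos) : PGame := valueFuel (stones p) p

/-!
The equivalence is a finite computation. Every pre-game involved is identical (equal up to
reindexing of options) to the interpretation of a game given by finite lists of options; on such
list games `≤` and `+` are computed by recursion, and `≤`, `≈` and `+` respect identity of
pre-games, so both inequalities are checked by evaluation.
-/

universe u

theorem List.forall₂_map_map {α β γ : Type*} {R : β → γ → Prop} {l : List α} {f : α → β}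
    {g : α → γ} (h : ∀ a ∈ l, R (f a) (g a)) : List.Forall₂ R (l.map f) (l.map g) :=
  List.forall₂_map_left_iff.2 (List.forall₂_map_right_iff.2 (List.forall₂_same.2 h))

namespace SetTheory.PGame

def LeftMoves : PGame.{u} → Type u
  | mk l _ _ _ => l

def RightMoves : PGame.{u} → Type u
  | mk _ r _ _ => r

def moveLeft : (g : PGame.{u}) → LeftMoves g → PGame.{u}
  | mk _ _ L _ => L

def moveRight : (g : PGame.{u}) → RightMoves g → PGame.{u}
  | mk _ _ _ R => R

theorem leLf_mk {xl xr yl yr : Type u} (xL : xl → PGame.{u}) (xR : xr → PGame.{u})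
    (yL : yl → PGame.{u}) (yR : yr → PGame.{u}) :
    leLf (mk xl xr xL xR) (mk yl yr yL yR) =
      ((∀ i, (leLf (xL i) (mk yl yr yL yR)).2) ∧ ∀ j, (leLf (mk xl xr xL xR) (yR j)).2,
       (∃ i, (leLf (mk xl xr xL xR) (yL i)).1) ∨ ∃ j, (leLf (xR j) (mk yl yr yL yR)).1) :=
  rfl

theorem leLf_snd_iff_not_fst (x y : PGame.{u}) :
    ((leLf x y).2 ↔ ¬ (leLf y x).1) ∧ ((leLf y x).2 ↔ ¬ (leLf x y).1) := by
  induction x generalizing y with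
  | mk xl xr xL xR ihxL ihxR =>
  induction y with
  | mk yl yr yL yR ihyL ihyR =>
  simp only [leLf_mk, not_and_or, not_forall]
  constructor
  · exact or_congr (exists_congr fun i => by rw [(ihyL i).2, not_not])
      (exists_congr fun j => by rw [(ihxR j _).2, not_not])
  · exact or_congr (exists_congr fun i => by rw [(ihxL i _).1, not_not])
      (exists_congr fun j => by rw [(ihyR j).1, not_not])

theorem le_iff_forall_not_le {x y : PGame.{u}} :
    x ≤ y ↔ (∀ a ∈ Set.range x.moveLeft, ¬ y ≤ a) ∧ ∀ b ∈ Set.range y.moveRight, ¬ b ≤ x := by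
  cases x with
  | mk xl xr xL xR =>
  cases y with
  | mk yl yr yL yR =>
  change (leLf _ _).1 ↔ (∀ a ∈ Set.range xL, ¬ (leLf _ a).1) ∧ ∀ b ∈ Set.range yR, ¬ (leLf b _).1
  simp only [leLf_mk, Set.forall_mem_range]
  exact and_congr (forall_congr' fun i => (leLf_snd_iff_not_fst _ _).1)
    (forall_congr' fun j => (leLf_snd_iff_not_fst _ _).2)

theorem range_ofLists_moveLeft (L R : List PGame.{u}) :
    Set.range (ofLists L R).moveLeft = {a | a ∈ L} := by
  ext a
  simp only [Set.mem_range, Set.mem_ofPred_eq, List.mem_iff_get]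
  exact ⟨fun ⟨i, h⟩ => ⟨i.down, h⟩, fun ⟨i, h⟩ => ⟨ULift.up i, h⟩⟩

theorem range_ofLists_moveRight (L R : List PGame.{u}) :
    Set.range (ofLists L R).moveRight = {a | a ∈ R} := by
  ext a
  simp only [Set.mem_range, Set.mem_ofPred_eq, List.mem_iff_get]
  exact ⟨fun ⟨i, h⟩ => ⟨i.down, h⟩, fun ⟨i, h⟩ => ⟨ULift.up i, h⟩⟩

theorem range_add_moveLeft (x y : PGame.{u}) :
    Set.range (x + y).moveLeft =
      (· + y) '' Set.range x.moveLeft ∪ (x + ·) '' Set.range y.moveLeft := by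
  obtain ⟨xl, xr, xL, xR⟩ := x
  obtain ⟨yl, yr, yL, yR⟩ := y
  exact (Set.Sum.elim_range _ _).trans
    (congrArg₂ _ (Set.range_comp (· + mk yl yr yL yR) xL) (Set.range_comp (mk xl xr xL xR + ·) yL))

theorem range_add_moveRight (x y : PGame.{u}) :
    Set.range (x + y).moveRight =
      (· + y) '' Set.range x.moveRight ∪ (x + ·) '' Set.range y.moveRight := by
  obtain ⟨xl, xr, xL, xR⟩ := x
  obtain ⟨yl, yr, yL, yR⟩ := y
  exact (Set.Sum.elim_range _ _).trans
    (congrArg₂ _ (Set.range_comp (· + mk yl yr yL yR) xR) (Set.range_comp (mk xl xr xL xR + ·) yR))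

def Identical : PGame.{u} → PGame.{u} → Prop
  | mk _ _ xL xR, mk _ _ yL yR =>
    Relator.BiTotal (fun i j => Identical (xL i) (yL j)) ∧
      Relator.BiTotal (fun i j => Identical (xR i) (yR j))

theorem identical_mk {xl xr yl yr : Type u} {xL : xl → PGame.{u}} {xR : xr → PGame.{u}}
    {yL : yl → PGame.{u}} {yR : yr → PGame.{u}} :
    Identical (mk xl xr xL xR) (mk yl yr yL yR) ↔
      Relator.BiTotal (fun i j => Identical (xL i) (yL j)) ∧
        Relator.BiTotal (fun i j => Identical (xR i) (yR j)) := by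
  rw [Identical]

theorem Identical.refl (x : PGame.{u}) : Identical x x := by
  induction x with
  | mk xl xr xL xR ihL ihR =>
    exact identical_mk.2
      ⟨⟨fun i => ⟨i, ihL i⟩, fun i => ⟨i, ihL i⟩⟩, ⟨fun i => ⟨i, ihR i⟩, fun i => ⟨i, ihR i⟩⟩⟩

theorem Identical.of_eq {x y : PGame.{u}} (h : x = y) : Identical x y :=
  h ▸ .refl x

theorem identical_iff {x y : PGame.{u}} :
    Identical x y ↔
      Relator.BiTotal (fun i j => Identical (x.moveLeft i) (y.moveLeft j)) ∧
        Relator.BiTotal (fun i j => Identical (x.moveRight i) (y.moveRight j)) := by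
  cases x; cases y; exact identical_mk

theorem identical_of_range_eq {x y : PGame.{u}} (hl : Set.range x.moveLeft = Set.range y.moveLeft)
    (hr : Set.range x.moveRight = Set.range y.moveRight) : Identical x y := by
  refine identical_iff.2 ⟨⟨fun i => ?_, fun j => ?_⟩, ⟨fun i => ?_, fun j => ?_⟩⟩
  · obtain ⟨j, hj⟩ := hl ▸ Set.mem_range_self i
    exact ⟨j, .of_eq hj.symm⟩
  · obtain ⟨i, hi⟩ := hl.symm ▸ Set.mem_range_self j
    exact ⟨i, .of_eq hi⟩
  · obtain ⟨j, hj⟩ := hr ▸ Set.mem_range_self i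
    exact ⟨j, .of_eq hj.symm⟩
  · obtain ⟨i, hi⟩ := hr.symm ▸ Set.mem_range_self j
    exact ⟨i, .of_eq hi⟩

theorem identical_ofLists {L R L' R' : List PGame.{u}} (hL : List.Forall₂ Identical L L')
    (hR : List.Forall₂ Identical R R') : Identical (ofLists L R) (ofLists L' R') := by
  rw [List.forall₂_iff_get] at hL hR
  refine identical_mk.2 ⟨⟨fun i => ?_, fun j => ?_⟩, ⟨fun i => ?_, fun j => ?_⟩⟩
  · exact ⟨⟨i.down.cast hL.1⟩, hL.2 _ _ _⟩
  · exact ⟨⟨j.down.cast hL.1.symm⟩, hL.2 _ _ _⟩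
  · exact ⟨⟨i.down.cast hR.1⟩, hR.2 _ _ _⟩
  · exact ⟨⟨j.down.cast hR.1.symm⟩, hR.2 _ _ _⟩

theorem Identical.trans {x y z : PGame.{u}} (hxy : Identical x y) (hyz : Identical y z) :
    Identical x z := by
  induction x generalizing y z with
  | mk xl xr xL xR ihL ihR =>
  obtain ⟨yl, yr, yL, yR⟩ := y
  obtain ⟨zl, zr, zL, zR⟩ := z
  obtain ⟨⟨hLl, hLr⟩, ⟨hRl, hRr⟩⟩ := identical_mk.1 hxy
  obtain ⟨⟨hLl', hLr'⟩, ⟨hRl', hRr'⟩⟩ := identical_mk.1 hyz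
  refine identical_mk.2 ⟨⟨fun i => ?_, fun k => ?_⟩, ⟨fun i => ?_, fun k => ?_⟩⟩
  · obtain ⟨j, hj⟩ := hLl i
    obtain ⟨k, hk⟩ := hLl' j
    exact ⟨k, ihL i hj hk⟩
  · obtain ⟨j, hj⟩ := hLr' k
    obtain ⟨i, hi⟩ := hLr j
    exact ⟨i, ihL i hi hj⟩
  · obtain ⟨j, hj⟩ := hRl i
    obtain ⟨k, hk⟩ := hRl' j
    exact ⟨k, ihR i hj hk⟩
  · obtain ⟨j, hj⟩ := hRr' k
    obtain ⟨i, hi⟩ := hRr j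
    exact ⟨i, ihR i hi hj⟩

theorem Identical.add {x x' y y' : PGame.{u}} (hx : Identical x x') (hy : Identical y y') :
    Identical (x + y) (x' + y') := by
  induction x generalizing x' y y' with
  | mk xl xr xL xR ihxL ihxR =>
  induction y generalizing x' y' with
  | mk yl yr yL yR ihyL ihyR =>
  obtain ⟨xl', xr', xL', xR'⟩ := x'
  obtain ⟨yl', yr', yL', yR'⟩ := y'
  obtain ⟨⟨hxLl, hxLr⟩, ⟨hxRl, hxRr⟩⟩ := identical_mk.1 hx
  obtain ⟨⟨hyLl, hyLr⟩, ⟨hyRl, hyRr⟩⟩ := identical_mk.1 hy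
  refine identical_mk.2 ⟨⟨?_, ?_⟩, ⟨?_, ?_⟩⟩
  · rintro (i | i)
    · obtain ⟨j, hj⟩ := hxLl i; exact ⟨.inl j, ihxL i hj hy⟩
    · obtain ⟨j, hj⟩ := hyLl i; exact ⟨.inr j, ihyL i hx hj⟩
  · rintro (j | j)
    · obtain ⟨i, hi⟩ := hxLr j; exact ⟨.inl i, ihxL i hi hy⟩
    · obtain ⟨i, hi⟩ := hyLr j; exact ⟨.inr i, ihyL i hx hi⟩
  · rintro (i | i)
    · obtain ⟨j, hj⟩ := hxRl i; exact ⟨.inl j, ihxR i hj hy⟩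
    · obtain ⟨j, hj⟩ := hyRl i; exact ⟨.inr j, ihyR i hx hj⟩
  · rintro (j | j)
    · obtain ⟨i, hi⟩ := hxRr j; exact ⟨.inl i, ihxR i hi hy⟩
    · obtain ⟨i, hi⟩ := hyRr j; exact ⟨.inr i, ihyR i hx hi⟩

theorem Identical.leLf_congr {x x' y y' : PGame.{u}} (hx : Identical x x') (hy : Identical y y') :
    ((leLf x y).1 ↔ (leLf x' y').1) ∧ ((leLf x y).2 ↔ (leLf x' y').2) := by
  induction x generalizing x' y y' with
  | mk xl xr xL xR ihxL ihxR =>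
  induction y generalizing x' y' with
  | mk yl yr yL yR ihyL ihyR =>
  obtain ⟨xl', xr', xL', xR'⟩ := x'
  obtain ⟨yl', yr', yL', yR'⟩ := y'
  obtain ⟨hxL, hxR⟩ := identical_mk.1 hx
  obtain ⟨hyL, hyR⟩ := identical_mk.1 hy
  simp only [leLf_mk]
  exact ⟨and_congr (hxL.rel_forall fun i _ h => (ihxL i h hy).2)
      (hyR.rel_forall fun j _ h => (ihyR j hx h).2),
    or_congr (hyL.rel_exists fun j _ h => (ihyL j hx h).1)
      (hxR.rel_exists fun i _ h => (ihxR i h hy).1)⟩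

theorem Identical.le_congr {x x' y y' : PGame.{u}} (hx : Identical x x') (hy : Identical y y') :
    x ≤ y ↔ x' ≤ y' :=
  (hx.leLf_congr hy).1

theorem Identical.equiv_congr {x x' y y' : PGame.{u}} (hx : Identical x x')
    (hy : Identical y y') : x ≈ y ↔ x' ≈ y' :=
  and_congr (hx.le_congr hy) (hy.le_congr hx)

end SetTheory.PGame

inductive ListGame : Type where
  | mk : List ListGame → List ListGame → ListGame

namespace ListGame

open PGame

def toPGame : ListGame → PGame.{u}
  | mk l r => PGame.ofLists (l.map toPGame) (r.map toPGame)

theorem toPGame_mk (l r : List ListGame) :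
    toPGame.{u} (mk l r) = PGame.ofLists (l.map toPGame) (r.map toPGame) := by
  rw [toPGame]

theorem range_toPGame_moveLeft (l r : List ListGame) :
    Set.range (toPGame.{u} (mk l r)).moveLeft = {a | a ∈ l.map toPGame} := by
  rw [toPGame_mk, PGame.range_ofLists_moveLeft]

theorem range_toPGame_moveRight (l r : List ListGame) :
    Set.range (toPGame.{u} (mk l r)).moveRight = {a | a ∈ r.map toPGame} := by
  rw [toPGame_mk, PGame.range_ofLists_moveRight]

theorem sizeOf_lt_of_mem_left {a : ListGame} {l r : List ListGame} (h : a ∈ l) :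
    sizeOf a < sizeOf (mk l r) := by
  have := List.sizeOf_lt_of_mem h
  simp only [mk.sizeOf_spec]
  omega

theorem sizeOf_lt_of_mem_right {a : ListGame} {l r : List ListGame} (h : a ∈ r) :
    sizeOf a < sizeOf (mk l r) := by
  have := List.sizeOf_lt_of_mem h
  simp only [mk.sizeOf_spec]
  omega

def leFuel : ℕ → ListGame → ListGame → Bool
  | 0, _, _ => true
  | n + 1, x@(mk xl _), y@(mk _ yr) =>
    xl.all (fun a => !leFuel n y a) && yr.all (fun b => !leFuel n b x)

theorem leFuel_iff {n : ℕ} {x y : ListGame} (hn : sizeOf x + sizeOf y ≤ n) :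
    leFuel n x y ↔ x.toPGame.{u} ≤ y.toPGame := by
  induction n generalizing x y with
  | zero => obtain ⟨xl, xr⟩ := x; simp only [mk.sizeOf_spec] at hn; omega
  | succ n ih =>
  obtain ⟨xl, xr⟩ := x
  obtain ⟨yl, yr⟩ := y
  rw [le_iff_forall_not_le]
  simp only [leFuel, range_toPGame_moveLeft, range_toPGame_moveRight, Bool.and_eq_true,
    List.all_eq_true, Bool.not_eq_true', Set.mem_ofPred_eq, List.forall_mem_map]
  refine and_congr (forall₂_congr fun a ha => ?_) (forall₂_congr fun b hb => ?_)
  · have := sizeOf_lt_of_mem_left (r := xr) ha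
    rw [← ih (by omega), Bool.not_eq_true]
  · have := sizeOf_lt_of_mem_right (l := yl) hb
    rw [← ih (by omega), Bool.not_eq_true]

theorem toPGame_equiv_of_leFuel {n : ℕ} {x y : ListGame} (hn : sizeOf x + sizeOf y ≤ n)
    (hxy : leFuel n x y) (hyx : leFuel n y x) : x.toPGame.{u} ≈ y.toPGame :=
  ⟨(leFuel_iff hn).1 hxy, (leFuel_iff (by omega)).1 hyx⟩

theorem identical_toPGame_add (xl xr yl yr : List ListGame) :
    Identical ((mk xl xr).toPGame.{u} + (mk yl yr).toPGame)
      (ofLists (xl.map (·.toPGame + (mk yl yr).toPGame) ++ yl.map ((mk xl xr).toPGame + ·.toPGame))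
        (xr.map (·.toPGame + (mk yl yr).toPGame) ++ yr.map ((mk xl xr).toPGame + ·.toPGame))) := by
  apply identical_of_range_eq <;>
  · ext
    simp [range_add_moveLeft, range_add_moveRight, range_toPGame_moveLeft,
      range_toPGame_moveRight, range_ofLists_moveLeft, range_ofLists_moveRight]

def addFuel : ℕ → ListGame → ListGame → ListGame
  | 0, _, _ => mk [] []
  | n + 1, x@(mk xl xr), y@(mk yl yr) =>
    mk (xl.map (addFuel n · y) ++ yl.map (addFuel n x ·))
      (xr.map (addFuel n · y) ++ yr.map (addFuel n x ·))

theorem identical_toPGame_add_addFuel {n : ℕ} {x y : ListGame} (hn : sizeOf x + sizeOf y ≤ n) :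
    Identical (x.toPGame.{u} + y.toPGame) (addFuel n x y).toPGame := by
  induction n generalizing x y with
  | zero => obtain ⟨xl, xr⟩ := x; simp only [mk.sizeOf_spec] at hn; omega
  | succ n ih =>
  obtain ⟨xl, xr⟩ := x
  obtain ⟨yl, yr⟩ := y
  refine (identical_toPGame_add xl xr yl yr).trans ?_
  rw [addFuel, toPGame_mk (_ ++ _), List.map_append, List.map_append, List.map_map, List.map_map,
    List.map_map, List.map_map]
  refine identical_ofLists (List.rel_append ?_ ?_) (List.rel_append ?_ ?_) <;>
    refine List.forall₂_map_map fun a ha => ih ?_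
  · have := sizeOf_lt_of_mem_left (r := xr) ha; omega
  · have := sizeOf_lt_of_mem_left (r := yr) ha; omega
  · have := sizeOf_lt_of_mem_right (l := xl) ha; omega
  · have := sizeOf_lt_of_mem_right (l := yl) ha; omega

def ofPos : ℕ → Pos → ListGame
  | 0, _ => mk [] []
  | n + 1, p => mk ((leftMoves p).map (ofPos n)) ((rightMoves p).map (ofPos n))

theorem identical_valueFuel_toPGame_ofPos (n : ℕ) (p : Pos) :
    Identical (valueFuel.{u} n p) (ofPos n p).toPGame := by
  induction n generalizing p with
  | zero =>
    refine identical_of_range_eq ?_ ?_ <;>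
    · simp only [ofPos, range_toPGame_moveLeft, range_toPGame_moveRight, List.map_nil,
        List.not_mem_nil, Set.ofPred_false]
      exact Set.range_eq_empty_iff.2 ⟨PEmpty.elim⟩
  | succ n ih =>
    rw [valueFuel, ofPos, toPGame_mk, List.map_map, List.map_map]
    exact identical_ofLists (List.forall₂_map_map fun q _ => ih q)
      (List.forall₂_map_map fun q _ => ih q)

theorem identical_value_toPGame_ofPos (p : Pos) :
    Identical (value.{u} p) (ofPos (stones p) p).toPGame :=
  identical_valueFuel_toPGame_ofPos _ _

end ListGame

/-- The clobber position `ooxoxx` is equivalent to the sum `oxox + ox`. -/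
theorem ooxoxx_equiv :
    value [Cell.o, Cell.o, Cell.x, Cell.o, Cell.x, Cell.x] ≈
      value [Cell.o, Cell.x, Cell.o, Cell.x] + value [Cell.o, Cell.x] := by
  have hx := ListGame.identical_value_toPGame_ofPos [Cell.o, Cell.o, Cell.x, Cell.o, Cell.x, Cell.x]
  have hyz := ((ListGame.identical_value_toPGame_ofPos [Cell.o, Cell.x, Cell.o, Cell.x]).add
    (ListGame.identical_value_toPGame_ofPos [Cell.o, Cell.x])).trans
      (ListGame.identical_toPGame_add_addFuel (n := 100) (by decide))
  exact (hx.equiv_congr hyz).2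
    (ListGame.toPGame_equiv_of_leFuel (n := 1000) (by decide) (by decide) (by decide))
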